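/- Let (D, g, h) be a winnable Czech hat game and S a set of vertices. Form the game on Option V by attaching a new vertex x universal to S with hatness h x = 2 and guessness g x = 1, keeping the guessness of all original vertices unchanged, keeping the hatness unchanged outside S, and replacing the hatness of each v ∈ S by h v + g v. The resulting Czech game is winnable. -/

import Mathlib

/-- A Czech hat game on the digraph with adjacency `D` (sage `v` sees sage `u`
iff `D v u`), guessness `g`, and hatness `h`, is winnable: there is a strategy
assigning to each sage `v` a set of `g v` guesses, depending only on the hats
she sees, such that for every coloring some sage guesses her own hat color. -/
def HatGame.Winnable {V : Type*} (D : V → V → Prop) (g h : V → ℕ) : Prop :=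
  ∃ F : ∀ v : V, (∀ u : V, Fin (h u)) → Finset (Fin (h v)),
    (∀ (v : V) (c c' : ∀ u : V, Fin (h u)),
        (∀ u : V, D v u → c u = c' u) → F v c = F v c') ∧
    (∀ (v : V) (c : ∀ u : V, Fin (h u)), (F v c).card = g v) ∧
    (∀ c : ∀ u : V, Fin (h u), ∃ v : V, c v ∈ F v c)

/-!
Call the colors `h v, …, h v + g v - 1` of a vertex `v ∈ S` high. The new vertex `x` bets on
whether some vertex of `S` wears a high color: it guesses `1` if it sees none and `0` otherwise.
When `x` wears `1`, every vertex of `S` guesses all of its `g v` high colors; in every other case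
the original vertices play the original strategy. If `x`'s bet fails, then either `x` wears `1`
and some vertex of `S` wears a high color, which it guesses, or `x` wears `0` and all colors are
low, so the original strategy wins.
-/

open Finset

theorem Fin.card_filter_le_val (m n : ℕ) : #{k : Fin n | m ≤ (k : ℕ)} = n - m := by
  have hlt := Fin.card_filter_val_lt (n := n) (m := m)
  have hsum := card_filter_add_card_filter_not (s := (univ : Finset (Fin n))) fun k => (k : ℕ) < m
  simp only [not_lt, card_univ, Fintype.card_fin] at hsum
  omega

namespace HatGame

variable {V : Type*}

structure Strategy (D : V → V → Prop) (g h : V → ℕ) where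
  guess : ∀ v : V, (∀ u : V, Fin (h u)) → Finset (Fin (h v))
  guess_congr : ∀ (v : V) (c c' : ∀ u : V, Fin (h u)),
    (∀ u : V, D v u → c u = c' u) → guess v c = guess v c'
  card_guess : ∀ (v : V) (c : ∀ u : V, Fin (h u)), #(guess v c) = g v

namespace Strategy

variable {D : V → V → Prop} {g h h' : V → ℕ}

def IsWinning (σ : Strategy D g h) : Prop :=
  ∀ c : ∀ u : V, Fin (h u), ∃ v : V, c v ∈ σ.guess v c

def WinsBelow (σ : Strategy D g h) (b : V → ℕ) : Prop :=
  ∀ c : ∀ u : V, Fin (h u), (∀ u, (c u : ℕ) < b u) → ∃ v : V, c v ∈ σ.guess v c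

def mono (σ : Strategy D g h) {D' : V → V → Prop} (hD : ∀ u v, D u v → D' u v) :
    Strategy D' g h where
  guess := σ.guess
  guess_congr v c c' hcc := σ.guess_congr v c c' fun u hu => hcc u (hD v u hu)
  card_guess := σ.card_guess

/-- Colors `≥ h u` are folded back modulo `h u`; only colorings below `h` matter. -/
def liftHatness (σ : Strategy D g h) (hpos : ∀ v, 0 < h v) (hle : ∀ v, h v ≤ h' v) :
    Strategy D g h' where
  guess v c := (σ.guess v fun u => ⟨c u % h u, Nat.mod_lt _ (hpos u)⟩).map (Fin.castLEEmb (hle v))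
  guess_congr v c c' hcc := by
    rw [σ.guess_congr v _ _ fun u hu => by rw [hcc u hu]]
  card_guess v c := by rw [card_map, σ.card_guess]

theorem IsWinning.winsBelow_liftHatness {σ : Strategy D g h} (hσ : σ.IsWinning)
    (hpos : ∀ v, 0 < h v) (hle : ∀ v, h v ≤ h' v) : (σ.liftHatness hpos hle).WinsBelow h := by
  intro c hc
  obtain ⟨v, hv⟩ := hσ fun u => ⟨c u % h u, Nat.mod_lt _ (hpos u)⟩
  exact ⟨v, mem_map.2 ⟨_, hv, Fin.ext (Nat.mod_eq_of_lt (hc v))⟩⟩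

end Strategy

theorem winnable_iff {D : V → V → Prop} {g h : V → ℕ} :
    Winnable D g h ↔ ∃ σ : Strategy D g h, σ.IsWinning :=
  ⟨fun ⟨F, hF, hcard, hwin⟩ => ⟨⟨F, hF, hcard⟩, hwin⟩,
    fun ⟨σ, hσ⟩ => ⟨σ.guess, σ.guess_congr, σ.card_guess, hσ⟩⟩

section Attach

variable (S : Set V) [DecidablePred (· ∈ S)]

def attachUniversal (D : V → V → Prop) : Option V → Option V → Prop
  | some u, some v => D u v
  | none, some v | some v, none => v ∈ S
  | none, none => False

def raiseHatness (g h : V → ℕ) (v : V) : ℕ := if v ∈ S then h v + g v else h v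

theorem le_raiseHatness (g h : V → ℕ) (v : V) : h v ≤ raiseHatness S g h v := by
  unfold raiseHatness; split_ifs <;> omega

variable {D : V → V → Prop} {g : V → ℕ} (h : V → ℕ)

open Classical in
noncomputable def newVertexGuess (c : ∀ v, Fin (raiseHatness S g h v)) : Finset (Fin 2) :=
  if ∀ v ∈ S, (c v : ℕ) < h v then {1} else {0}

open Classical in
theorem newVertexGuess_congr {c c' : ∀ v, Fin (raiseHatness S g h v)}
    (hcc : ∀ v ∈ S, c v = c' v) : newVertexGuess S h c = newVertexGuess S h c' := by
  unfold newVertexGuess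
  exact if_congr (forall₂_congr fun v hv => by rw [hcc v hv]) rfl rfl

theorem card_newVertexGuess (c : ∀ v, Fin (raiseHatness S g h v)) :
    #(newVertexGuess S h c) = 1 := by
  unfold newVertexGuess
  split_ifs <;> rfl

def oldVertexGuess (σ : Strategy D g (raiseHatness S g h)) (v : V) (x : Fin 2)
    (c : ∀ u, Fin (raiseHatness S g h u)) : Finset (Fin (raiseHatness S g h v)) :=
  if v ∈ S ∧ x = 1 then univ.filter (h v ≤ ·.val) else σ.guess v c

theorem oldVertexGuess_congr (σ : Strategy D g (raiseHatness S g h)) (v : V) {x x' : Fin 2}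
    {c c' : ∀ u, Fin (raiseHatness S g h u)} (hx : v ∈ S → x = x')
    (hc : σ.guess v c = σ.guess v c') :
    oldVertexGuess S h σ v x c = oldVertexGuess S h σ v x' c' := by
  by_cases hv : v ∈ S
  · simp only [oldVertexGuess, hx hv, hc]
  · simp only [oldVertexGuess, hv, false_and, if_false, hc]

theorem card_oldVertexGuess (σ : Strategy D g (raiseHatness S g h)) (v : V) (x : Fin 2)
    (c : ∀ u, Fin (raiseHatness S g h u)) : #(oldVertexGuess S h σ v x c) = g v := by
  unfold oldVertexGuess
  split_ifs with hx
  · rw [Fin.card_filter_le_val, raiseHatness, if_pos hx.1, Nat.add_sub_cancel_left]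
  · exact σ.card_guess v c

noncomputable def attachStrategy (σ : Strategy D g (raiseHatness S g h)) :
    Strategy (attachUniversal S D) (Option.elim · 1 g) (Option.elim · 2 (raiseHatness S g h)) where
  guess
    | none, c => newVertexGuess S h fun v => c (some v)
    | some v, c => oldVertexGuess S h σ v (c none) fun u => c (some u)
  guess_congr
    | none, _, _, hcc => newVertexGuess_congr S h fun v hv => hcc (some v) hv
    | some v, _, _, hcc =>
      oldVertexGuess_congr S h σ v (hcc none) (σ.guess_congr v _ _ fun u hu => hcc (some u) hu)
  card_guess
    | none, _ => card_newVertexGuess S h _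
    | some v, _ => card_oldVertexGuess S h σ v _ _

theorem attachStrategy_isWinning {σ : Strategy D g (raiseHatness S g h)} (hσ : σ.WinsBelow h) :
    (attachStrategy S h σ).IsWinning := by
  intro c
  let x : Fin 2 := c none
  let c₀ : ∀ v, Fin (raiseHatness S g h v) := fun v => c (some v)
  have hnew : c none ∈ (attachStrategy S h σ).guess none c ↔ x ∈ newVertexGuess S h c₀ := Iff.rfl
  have hold : ∀ v, c (some v) ∈ (attachStrategy S h σ).guess (some v) c ↔
      c₀ v ∈ oldVertexGuess S h σ v x c₀ := fun v => Iff.rfl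
  have hx : x = 0 ∨ x = 1 := by omega
  by_cases hlow : ∀ v ∈ S, (c₀ v : ℕ) < h v
  · rcases hx with hx | hx
    · have hall : ∀ v, (c₀ v : ℕ) < h v := fun v => by
        by_cases hv : v ∈ S
        · exact hlow v hv
        · simpa [raiseHatness, hv] using (c₀ v).isLt
      obtain ⟨v, hv⟩ := hσ c₀ hall
      exact ⟨some v, (hold v).2 (by simp [oldVertexGuess, hx, hv])⟩
    · exact ⟨none, hnew.2 (by rw [newVertexGuess, if_pos hlow, hx]; exact mem_singleton_self 1)⟩
  · push Not at hlow
    obtain ⟨v, hvS, hhigh⟩ := hlow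
    rcases hx with hx | hx
    · refine ⟨none, hnew.2 ?_⟩
      rw [newVertexGuess, if_neg fun hlow => (hlow v hvS).not_ge hhigh, hx]
      exact mem_singleton_self 0
    · exact ⟨some v, (hold v).2 (by simp [oldVertexGuess, hvS, hhigh, hx])⟩

end Attach

end HatGame

theorem czech_attach_hatness_two {V : Type*}
    (D : V → V → Prop)
    (g h : V → ℕ) (hgh : ∀ v, 0 < g v ∧ g v < h v)
    (S : Set V) [DecidablePred (· ∈ S)]
    (hw : HatGame.Winnable D g h) :
    HatGame.Winnable
      (fun a b : Option V =>
        match a, b with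
        | none, some v => v ∈ S
        | some v, none => v ∈ S
        | some u, some v => D u v
        | none, none => False)
      (fun a => a.elim 1 g)
      (fun a => a.elim 2 (fun v => if v ∈ S then h v + g v else h v)) := by
  obtain ⟨σ, hσ⟩ := HatGame.winnable_iff.1 hw
  have hpos : ∀ v, 0 < h v := fun v => (hgh v).1.trans (hgh v).2
  let σ' := σ.liftHatness hpos (HatGame.le_raiseHatness S g h)
  refine HatGame.winnable_iff.2 ⟨(HatGame.attachStrategy S h σ').mono ?_,
    HatGame.attachStrategy_isWinning S h (hσ.winsBelow_liftHatness hpos _)⟩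
  -- `attachUniversal S D` is this adjacency, but its `match` is compiled separately.
  rintro (_ | u) (_ | v) huv <;> exact huv
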